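/- Let n, m ≥ 1 and let f : ℝ → TP^m be an n-th tropical holomorphic curve. If (f_0,…,f_m) and (g_0,…,g_m) are any two reduced representations of f, then for every r > 0 the tropical Cartan characteristic functions computed from them coincide: (F(r)+F(−r))/2 − F(0) = (G(r)+G(−r))/2 − G(0), where F(x) = max_{0≤i≤m} f_i(x) and G(x) = max_{0≤i≤m} g_i(x). Hence T_f(r) is independent of the choice of reduced representation. -/

import Mathlib

open Filter MeasureTheory Asymptotics Polynomial
open scoped Classical

noncomputable section

namespace Trop

/-- sign from the right: `sgn(x⁺)` (equal to `sgn x` for `x ≠ 0`, and `+1` at `0`). -/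
def sgnR (x : ℝ) : ℝ := if x < 0 then -1 else 1

/-- sign from the left: `sgn(x⁻)` (equal to `sgn x` for `x ≠ 0`, and `-1` at `0`). -/
def sgnL (x : ℝ) : ℝ := if 0 < x then 1 else -1

/-- `p` is the polynomial piece of `f` immediately to the right of `x`. -/
def IsRightPiece (f : ℝ → ℝ) (x : ℝ) (p : Polynomial ℝ) : Prop :=
  ∃ ε > (0 : ℝ), ∀ y ∈ Set.Ico x (x + ε), f y = p.eval y

/-- `p` is the polynomial piece of `f` immediately to the left of `x`. -/
def IsLeftPiece (f : ℝ → ℝ) (x : ℝ) (p : Polynomial ℝ) : Prop :=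
  ∃ ε > (0 : ℝ), ∀ y ∈ Set.Ioc (x - ε) x, f y = p.eval y

/-- The right polynomial piece of `f` at `x` (junk value `0` if none exists). -/
def rightPoly (f : ℝ → ℝ) (x : ℝ) : Polynomial ℝ :=
  if h : ∃ p, IsRightPiece f x p then h.choose else 0

/-- The left polynomial piece of `f` at `x` (junk value `0` if none exists). -/
def leftPoly (f : ℝ → ℝ) (x : ℝ) : Polynomial ℝ :=
  if h : ∃ p, IsLeftPiece f x p then h.choose else 0

/-- The one-sided `j`-th derivative `f^{(j)}(x⁺)` from the right. -/
def rderiv (f : ℝ → ℝ) (j : ℕ) (x : ℝ) : ℝ :=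
  ((fun q : Polynomial ℝ => Polynomial.derivative q)^[j] (rightPoly f x)).eval x

/-- The one-sided `j`-th derivative `f^{(j)}(x⁻)` from the left. -/
def lderiv (f : ℝ → ℝ) (j : ℕ) (x : ℝ) : ℝ :=
  ((fun q : Polynomial ℝ => Polynomial.derivative q)^[j] (leftPoly f x)).eval x

/-- `ω_f^{(j)}(x) = (sgn^{j+1}(x⁺) f^{(j)}(x⁺) − sgn^{j+1}(x⁻) f^{(j)}(x⁻))/j!`. -/
def omega (f : ℝ → ℝ) (j : ℕ) (x : ℝ) : ℝ :=
  (sgnR x ^ (j + 1) * rderiv f j x - sgnL x ^ (j + 1) * lderiv f j x) / (Nat.factorial j : ℝ)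

/-- `τ_f^{(j)}(x) = (f^{(j)}(x⁺) − f^{(j)}(x⁻))/j!`. -/
def tau (f : ℝ → ℝ) (j : ℕ) (x : ℝ) : ℝ :=
  (rderiv f j x - lderiv f j x) / (Nat.factorial j : ℝ)

/-- A continuous piecewise polynomial function: there is a strictly increasing doubly infinite
sequence of breakpoints with no finite accumulation point, on each segment `f` agrees with a
polynomial of degree at most `n`, and the supremum of the degrees of the pieces equals `n`. -/
def IsNthPiecewisePoly (n : ℕ) (f : ℝ → ℝ) : Prop :=
  Continuous f ∧
  ∃ (x : ℤ → ℝ) (p : ℤ → Polynomial ℝ),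
    StrictMono x ∧
    Tendsto x atTop atTop ∧ Tendsto x atBot atBot ∧
    (∀ i : ℤ, ∀ y ∈ Set.Icc (x (i - 1)) (x i), f y = (p i).eval y) ∧
    (∀ i : ℤ, (p i).natDegree ≤ n) ∧
    (∃ i : ℤ, (p i).natDegree = n)

/-- `f` has no `j`-th poles for any `j ≥ 1`. -/
def NoPoles (f : ℝ → ℝ) : Prop := ∀ j : ℕ, 1 ≤ j → ∀ x : ℝ, 0 ≤ omega f j x

/-- `f` has no `j`-th roots for any `j ≥ 1`. -/
def NoRoots (f : ℝ → ℝ) : Prop := ∀ j : ℕ, 1 ≤ j → ∀ x : ℝ, omega f j x ≤ 0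

/-- An `n`-th tropical meromorphic function. -/
def IsTropicalMeromorphic (n : ℕ) (f : ℝ → ℝ) : Prop :=
  IsNthPiecewisePoly n f ∧ ¬ ∃ c : ℝ, ∀ x : ℝ, f x = c

/-- An `n`-th tropical entire function (no poles; constants allowed when `n = 0`). -/
def IsTropicalEntire (n : ℕ) (f : ℝ → ℝ) : Prop :=
  IsNthPiecewisePoly n f ∧ NoPoles f

/-- The `n`-th max-plus proximity function `m(r, f)`. -/
def mProx (r : ℝ) (f : ℝ → ℝ) : ℝ := (max (f r) 0 + max (f (-r)) 0) / 2

/-- The `j`-th integrated max-plus counting function of poles,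
`N^{(j)}(r, f) = (1/2) Σ_z |ω_f^{(j)}(z)| (r − |z|)^j` over the `j`-th poles `z` in `(−r, r)`. -/
def Npole (j : ℕ) (r : ℝ) (f : ℝ → ℝ) : ℝ :=
  (1 / 2) * ∑' z : {z : ℝ // z ∈ Set.Ioo (-r) r ∧ omega f j z < 0},
    |omega f j z.1| * (r - |z.1|) ^ j

/-- The `j`-th integrated counting function of roots, `N^{(j)}(r, 1₀ ⊘ f)`. -/
def Nroot (j : ℕ) (r : ℝ) (f : ℝ → ℝ) : ℝ :=
  (1 / 2) * ∑' z : {z : ℝ // z ∈ Set.Ioo (-r) r ∧ 0 < omega f j z},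
    |omega f j z.1| * (r - |z.1|) ^ j

/-- Partial pole-counting function restricted to a set `I`. -/
def NpoleIn (j : ℕ) (r : ℝ) (I : Set ℝ) (f : ℝ → ℝ) : ℝ :=
  (1 / 2) * ∑' z : {z : ℝ // z ∈ I ∧ omega f j z < 0},
    |omega f j z.1| * (r - |z.1|) ^ j

/-- Partial root-counting function restricted to a set `I`. -/
def NrootIn (j : ℕ) (r : ℝ) (I : Set ℝ) (f : ℝ → ℝ) : ℝ :=
  (1 / 2) * ∑' z : {z : ℝ // z ∈ I ∧ 0 < omega f j z},
    |omega f j z.1| * (r - |z.1|) ^ j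

/-- The `n`-th max-plus characteristic function `T(r, f)`. -/
def Tchar (n : ℕ) (r : ℝ) (f : ℝ → ℝ) : ℝ :=
  mProx r f + ∑ j ∈ Finset.Icc 1 n, Npole j r f

/-- The hyper-order `ρ₂(f) = limsup_{r→∞} log log T(r,f) / log r`. -/
def hyperOrder (n : ℕ) (f : ℝ → ℝ) : ℝ :=
  Filter.limsup (fun r : ℝ => Real.log (Real.log (Tchar n r f)) / Real.log r) Filter.atTop

/-- `E ⊆ (1, ∞)` has finite logarithmic measure: `∫_E dt/t < ∞`. -/
def FiniteLogMeasure (E : Set ℝ) : Prop :=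
  E ⊆ Set.Ioi 1 ∧ (∫⁻ t in E, ENNReal.ofReal (1 / t)) < ⊤

/-- A well defined polynomial: apart from the constant term, only the coefficients whose index
has the same parity as the degree survive, and they all have the same sign. -/
def WellDefinedPoly (p : Polynomial ℝ) : Prop :=
  (∀ k : ℕ, 1 ≤ k → k % 2 ≠ p.natDegree % 2 → p.coeff k = 0) ∧
  ((∀ k : ℕ, 1 ≤ k → 0 ≤ p.coeff k) ∨ (∀ k : ℕ, 1 ≤ k → p.coeff k ≤ 0))

/-- A piecewise polynomial function is well defined if all its polynomial pieces are. -/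
def WellDefinedFn (f : ℝ → ℝ) : Prop :=
  ∀ x : ℝ, WellDefinedPoly (rightPoly f x) ∧ WellDefinedPoly (leftPoly f x)

/-- The pointwise maximum of the components of a representation of a tropical holomorphic curve. -/
def Fmax {m : ℕ} (f : Fin (m + 1) → ℝ → ℝ) (x : ℝ) : ℝ := ⨆ i, f i x

/-- The tropical Cartan characteristic function of the curve represented by `f`. -/
def TCartan {m : ℕ} (f : Fin (m + 1) → ℝ → ℝ) (r : ℝ) : ℝ :=
  (Fmax f r + Fmax f (-r)) / 2 - Fmax f 0

/-- `f` is a representation of an `n`-th tropical holomorphic curve `ℝ → TP^m`: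
each component is an `n_i`-th tropical entire function and `max_i n_i = n`. -/
def IsHoloCurveRep (n : ℕ) {m : ℕ} (f : Fin (m + 1) → ℝ → ℝ) : Prop :=
  ∃ d : Fin (m + 1) → ℕ, (∀ i, IsTropicalEntire (d i) (f i)) ∧ Finset.univ.sup d = n

/-- A reduced representation: the components have no common `j`-th roots. -/
def ReducedRep {m : ℕ} (f : Fin (m + 1) → ℝ → ℝ) : Prop :=
  ¬ ∃ (j : ℕ) (x : ℝ), 1 ≤ j ∧ ∀ i, 0 < omega (f i) j x

/-- Two representations define the same curve in `TP^m`: pointwise they differ by a scalar. -/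
def SameCurve {m : ℕ} (f g : Fin (m + 1) → ℝ → ℝ) : Prop :=
  ∀ x : ℝ, ∃ lam : ℝ, ∀ i, f i x = g i x + lam

/-- The curve represented by `f` is non-constant. -/
def NonConstantCurve {m : ℕ} (f : Fin (m + 1) → ℝ → ℝ) : Prop :=
  ¬ ∀ x y : ℝ, ∃ lam : ℝ, ∀ i, f i x = f i y + lam

/-- The tropical Casoratian `C₀(f₀, …, f_m)(x) = max_σ Σ_i f_i(x + σ(i))`. -/
def Casoratian {m : ℕ} (f : Fin (m + 1) → ℝ → ℝ) (x : ℝ) : ℝ :=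
  ⨆ σ : Equiv.Perm (Fin (m + 1)), ∑ i, f i (x + ((σ i : ℕ) : ℝ))

end Trop

end


section TropAux
open Trop Polynomial

namespace TropAux

variable {f g u v : ℝ → ℝ} {x : ℝ} {p q : Polynomial ℝ}

lemma right_unique (hp : IsRightPiece f x p) (hq : IsRightPiece f x q) : p = q := by
  obtain ⟨e1, he1, h1⟩ := hp
  obtain ⟨e2, he2, h2⟩ := hq
  refine Polynomial.eq_of_infinite_eval_eq _ _ ?_
  have hxx : x < x + min e1 e2 := by
    have := lt_min he1 he2; linarith
  refine (Set.Ico_infinite hxx).mono ?_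
  rintro y ⟨hy1, hy2⟩
  have hm1 := min_le_left e1 e2
  have hm2 := min_le_right e1 e2
  have e1y := h1 y ⟨hy1, by linarith⟩
  have e2y := h2 y ⟨hy1, by linarith⟩
  simp only [Set.mem_setOf_eq]
  rw [← e1y, ← e2y]

lemma left_unique (hp : IsLeftPiece f x p) (hq : IsLeftPiece f x q) : p = q := by
  obtain ⟨e1, he1, h1⟩ := hp
  obtain ⟨e2, he2, h2⟩ := hq
  refine Polynomial.eq_of_infinite_eval_eq _ _ ?_
  have hxx : x - min e1 e2 < x := by
    have := lt_min he1 he2; linarith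
  refine (Set.Ioc_infinite hxx).mono ?_
  rintro y ⟨hy1, hy2⟩
  have hm1 := min_le_left e1 e2
  have hm2 := min_le_right e1 e2
  have e1y := h1 y ⟨by linarith, hy2⟩
  have e2y := h2 y ⟨by linarith, hy2⟩
  simp only [Set.mem_setOf_eq]
  rw [← e1y, ← e2y]

lemma rightPoly_eq (hp : IsRightPiece f x p) : rightPoly f x = p := by
  have h : ∃ q, IsRightPiece f x q := ⟨p, hp⟩
  rw [rightPoly, dif_pos h]
  exact right_unique h.choose_spec hp

lemma leftPoly_eq (hp : IsLeftPiece f x p) : leftPoly f x = p := by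
  have h : ∃ q, IsLeftPiece f x q := ⟨p, hp⟩
  rw [leftPoly, dif_pos h]
  exact left_unique h.choose_spec hp

lemma rightPoly_spec (h : ∃ q, IsRightPiece f x q) : IsRightPiece f x (rightPoly f x) := by
  rw [rightPoly, dif_pos h]; exact h.choose_spec

lemma leftPoly_spec (h : ∃ q, IsLeftPiece f x q) : IsLeftPiece f x (leftPoly f x) := by
  rw [leftPoly, dif_pos h]; exact h.choose_spec

lemma right_eval_self (hp : IsRightPiece f x p) : p.eval x = f x := by
  obtain ⟨e, he, h⟩ := hp
  exact (h x ⟨le_refl x, by linarith⟩).symm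

lemma left_eval_self (hp : IsLeftPiece f x p) : p.eval x = f x := by
  obtain ⟨e, he, h⟩ := hp
  exact (h x ⟨by linarith, le_refl x⟩).symm

/-- Existence of one-sided pieces for piecewise polynomial functions. -/
lemma exists_pieces {n : ℕ} (h : IsNthPiecewisePoly n f) (y : ℝ) :
    (∃ p, IsRightPiece f y p) ∧ (∃ p, IsLeftPiece f y p) := by
  obtain ⟨hc, xx, pp, hmono, htop, hbot, hpiece, -, -⟩ := h
  have hbdd : ∃ b : ℤ, ∀ z : ℤ, y ≤ xx z → b ≤ z := by
    obtain ⟨b, hb⟩ := (hbot.eventually_le_atBot (y - 1)).exists_forall_of_atBot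
    refine ⟨b + 1, fun z hz => ?_⟩
    by_contra hlt
    push_neg at hlt
    have := hb z (by omega)
    linarith
  have hinh : ∃ z : ℤ, y ≤ xx z := (htop.eventually_ge_atTop y).exists
  obtain ⟨i, hi, hleast⟩ := Int.exists_least_of_bdd hbdd hinh
  have hip : xx (i - 1) < y := by
    by_contra hcon
    push_neg at hcon
    have := hleast (i - 1) hcon
    omega
  constructor
  · rcases eq_or_lt_of_le hi with heq | hlt
    · -- y = xx i : use piece i+1
      refine ⟨pp (i + 1), xx (i + 1) - xx i, by
        have := hmono (show i < i + 1 by omega); linarith, fun z hz => ?_⟩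
      obtain ⟨hz1, hz2⟩ := hz
      rw [heq] at hz1 hz2
      have h1 : xx (i + 1 - 1) ≤ z := by
        have : (i + 1 - 1 : ℤ) = i := by omega
        rw [this]; exact hz1
      exact hpiece (i + 1) z ⟨h1, by linarith⟩
    · refine ⟨pp i, xx i - y, by linarith, fun z hz => ?_⟩
      exact hpiece i z ⟨by have := hz.1; linarith, by have := hz.2; linarith⟩
  · refine ⟨pp i, y - xx (i - 1), by linarith, fun z hz => ?_⟩
    exact hpiece i z ⟨by have := hz.1; linarith, by have := hz.2; linarith⟩

lemma right_add (hp : IsRightPiece u x p) (hq : IsRightPiece v x q) :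
    IsRightPiece (fun y => u y + v y) x (p + q) := by
  obtain ⟨e1, he1, h1⟩ := hp
  obtain ⟨e2, he2, h2⟩ := hq
  refine ⟨min e1 e2, lt_min he1 he2, fun z hz => ?_⟩
  have hm1 := min_le_left e1 e2
  have hm2 := min_le_right e1 e2
  rw [eval_add, ← h1 z ⟨hz.1, by have := hz.2; linarith⟩,
    ← h2 z ⟨hz.1, by have := hz.2; linarith⟩]

lemma left_add (hp : IsLeftPiece u x p) (hq : IsLeftPiece v x q) :
    IsLeftPiece (fun y => u y + v y) x (p + q) := by
  obtain ⟨e1, he1, h1⟩ := hp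
  obtain ⟨e2, he2, h2⟩ := hq
  refine ⟨min e1 e2, lt_min he1 he2, fun z hz => ?_⟩
  have hm1 := min_le_left e1 e2
  have hm2 := min_le_right e1 e2
  rw [eval_add, ← h1 z ⟨by have := hz.1; linarith, hz.2⟩,
    ← h2 z ⟨by have := hz.1; linarith, hz.2⟩]

lemma right_sub (hp : IsRightPiece u x p) (hq : IsRightPiece v x q) :
    IsRightPiece (fun y => u y - v y) x (p - q) := by
  obtain ⟨e1, he1, h1⟩ := hp
  obtain ⟨e2, he2, h2⟩ := hq
  refine ⟨min e1 e2, lt_min he1 he2, fun z hz => ?_⟩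
  have hm1 := min_le_left e1 e2
  have hm2 := min_le_right e1 e2
  rw [eval_sub, ← h1 z ⟨hz.1, by have := hz.2; linarith⟩,
    ← h2 z ⟨hz.1, by have := hz.2; linarith⟩]

lemma left_sub (hp : IsLeftPiece u x p) (hq : IsLeftPiece v x q) :
    IsLeftPiece (fun y => u y - v y) x (p - q) := by
  obtain ⟨e1, he1, h1⟩ := hp
  obtain ⟨e2, he2, h2⟩ := hq
  refine ⟨min e1 e2, lt_min he1 he2, fun z hz => ?_⟩
  have hm1 := min_le_left e1 e2
  have hm2 := min_le_right e1 e2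
  rw [eval_sub, ← h1 z ⟨by have := hz.1; linarith, hz.2⟩,
    ← h2 z ⟨by have := hz.1; linarith, hz.2⟩]

lemma iterD_add (j : ℕ) (p q : Polynomial ℝ) :
    (fun r : Polynomial ℝ => derivative r)^[j] (p + q) =
      (fun r : Polynomial ℝ => derivative r)^[j] p +
        (fun r : Polynomial ℝ => derivative r)^[j] q := by
  induction j generalizing p q with
  | zero => rfl
  | succ j ih =>
      simp only [Function.iterate_succ_apply, derivative_add]
      exact ih _ _

/-- Additivity of `omega` when both summands have one-sided pieces. -/
lemma omega_add
    (hu1 : ∃ p, IsRightPiece u x p) (hu2 : ∃ p, IsLeftPiece u x p)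
    (hv1 : ∃ p, IsRightPiece v x p) (hv2 : ∃ p, IsLeftPiece v x p) (j : ℕ) :
    Trop.omega (fun y => u y + v y) j x = Trop.omega u j x + Trop.omega v j x := by
  obtain ⟨p1, hp1⟩ := hu1
  obtain ⟨p2, hp2⟩ := hu2
  obtain ⟨q1, hq1⟩ := hv1
  obtain ⟨q2, hq2⟩ := hv2
  have hr : rightPoly (fun y => u y + v y) x = p1 + q1 := rightPoly_eq (right_add hp1 hq1)
  have hl : leftPoly (fun y => u y + v y) x = p2 + q2 := leftPoly_eq (left_add hp2 hq2)
  have hfac : (0 : ℝ) < (Nat.factorial j : ℝ) := by positivity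
  unfold Trop.omega Trop.rderiv Trop.lderiv
  rw [hr, hl, rightPoly_eq hp1, rightPoly_eq hq1, leftPoly_eq hp2, leftPoly_eq hq2,
    iterD_add, iterD_add, eval_add, eval_add]
  field_simp
  ring

end TropAux
end TropAux
section TropAux2
open Trop Polynomial

namespace TropAux

variable {f : ℝ → ℝ} {x : ℝ} {p q : Polynomial ℝ}

lemma poly_eq_of_iterD_eval_eq {x : ℝ} {p q : Polynomial ℝ}
    (h : ∀ j : ℕ, ((fun r : Polynomial ℝ => derivative r)^[j] p).eval x =
      ((fun r : Polynomial ℝ => derivative r)^[j] q).eval x) : p = q := by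
  have hD : (fun r : Polynomial ℝ => derivative r) = ⇑(@Polynomial.derivative ℝ _) := rfl
  rw [hD] at h
  have hz : ∀ k : ℕ, (Polynomial.hasseDeriv k (p - q)).eval x = 0 := by
    intro k
    have hk : (k.factorial : ℝ) • (Polynomial.hasseDeriv k (p - q)).eval x
        = ((⇑(@Polynomial.derivative ℝ _))^[k] (p - q)).eval x := by
      rw [← Polynomial.factorial_smul_hasseDeriv (R := ℝ) k]
      simp [Polynomial.eval_smul]
    rw [Polynomial.iterate_derivative_sub, eval_sub, h k, sub_self] at hk
    have hfac : (k.factorial : ℝ) ≠ 0 := by positivity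
    have := hk
    rw [smul_eq_mul] at this
    exact (mul_eq_zero.mp this).resolve_left hfac
  exact sub_eq_zero.mp (Polynomial.eq_zero_of_hasseDeriv_eq_zero (p - q) x hz)

/-- At a nonzero point with all `omega` vanishing, the two one-sided pieces agree. -/
lemma rightPoly_eq_leftPoly (hx : x ≠ 0)
    (h1 : ∃ p, IsRightPiece f x p) (h2 : ∃ p, IsLeftPiece f x p)
    (hw : ∀ j : ℕ, 1 ≤ j → Trop.omega f j x = 0) :
    rightPoly f x = leftPoly f x := by
  refine poly_eq_of_iterD_eval_eq (x := x) (fun j => ?_)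
  rcases Nat.eq_zero_or_pos j with hj | hj
  · subst hj
    simp only [Function.iterate_zero, id_eq]
    rw [right_eval_self (rightPoly_spec h1), left_eval_self (leftPoly_spec h2)]
  · have hw' := hw j hj
    have hs : sgnR x = sgnL x := by
      unfold sgnR sgnL
      rcases lt_trichotomy x 0 with h | h | h
      · rw [if_pos h, if_neg (by linarith)]
      · exact absurd h hx
      · rw [if_neg (by linarith), if_pos h]
    have hsne : sgnL x ≠ 0 := by
      unfold sgnL; split <;> norm_num
    unfold Trop.omega Trop.rderiv Trop.lderiv at hw'
    rw [hs] at hw'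
    have hfac : (Nat.factorial j : ℝ) ≠ 0 := by positivity
    have hpow : sgnL x ^ (j + 1) ≠ 0 := pow_ne_zero _ hsne
    rw [_root_.div_eq_zero_iff] at hw'
    have hnum : sgnL x ^ (j + 1) *
        (((fun r : Polynomial ℝ => derivative r)^[j] (rightPoly f x)).eval x -
          ((fun r : Polynomial ℝ => derivative r)^[j] (leftPoly f x)).eval x) = 0 := by
      rcases hw' with h' | h'
      · linear_combination h'
      · exact absurd h' hfac
    have hsub := (mul_eq_zero.mp hnum).resolve_left hpow
    linarith

/-- Rightward propagation: if all `omega` vanish, `f` equals its right piece at `0`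
on all of `[0, ∞)`. -/
lemma extend_right (hc : Continuous f)
    (hex : ∀ y : ℝ, (∃ p, IsRightPiece f y p) ∧ (∃ p, IsLeftPiece f y p))
    (hw : ∀ j : ℕ, 1 ≤ j → ∀ x : ℝ, Trop.omega f j x = 0) :
    ∀ y : ℝ, 0 ≤ y → f y = (rightPoly f 0).eval y := by
  set p := rightPoly f 0 with hp
  have hp0 : f 0 = p.eval 0 := (right_eval_self (rightPoly_spec (hex 0).1)).symm
  intro y hy
  set s : Set ℝ := {t | ∀ z ∈ Set.Icc (0:ℝ) t, f z = p.eval z} with hs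
  have h0 : (0:ℝ) ∈ s := by
    intro z hz
    have : z = 0 := le_antisymm hz.2 hz.1
    rw [this]; exact hp0
  have hclosed : IsClosed s := by
    rw [← isOpen_compl_iff]
    rw [isOpen_iff_mem_nhds]
    intro t ht
    simp only [Set.mem_compl_iff, hs, Set.mem_setOf_eq, not_forall] at ht
    obtain ⟨z, hz, hne⟩ := ht
    have hz0 : 0 < z := by
      rcases lt_or_eq_of_le hz.1 with h | h
      · exact h
      · exfalso; rw [← h] at hne; exact hne hp0
    rcases lt_or_eq_of_le hz.2 with hlt | heqz
    · -- z < t : everything above z fails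
      refine Filter.mem_of_superset (Ioi_mem_nhds hlt) ?_
      intro w hw'
      simp only [Set.mem_compl_iff, hs, Set.mem_setOf_eq, not_forall]
      exact ⟨z, ⟨hz.1, le_of_lt hw'⟩, hne⟩
    · -- z = t : use continuity
      subst heqz
      have hopen : IsOpen {w : ℝ | f w ≠ p.eval w} := by
        have : {w : ℝ | f w ≠ p.eval w} = (fun w => f w - p.eval w) ⁻¹' {(0:ℝ)}ᶜ := by
          ext w; simp [sub_eq_zero]
        rw [this]
        exact (hc.sub (Polynomial.continuous_aeval p)).isOpen_preimage _ (isOpen_compl_singleton)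
      have hU : {w : ℝ | f w ≠ p.eval w} ∩ Set.Ioi (0:ℝ) ∈ nhds z :=
        Filter.inter_mem (hopen.mem_nhds hne) (Ioi_mem_nhds hz0)
      refine Filter.mem_of_superset hU ?_
      rintro w ⟨hw1, hw2⟩
      simp only [Set.mem_compl_iff, hs, Set.mem_setOf_eq, not_forall]
      exact ⟨w, ⟨le_of_lt hw2, le_refl w⟩, hw1⟩
  have hstep : ∀ t ∈ s ∩ Set.Ico 0 y, ∀ y' ∈ Set.Ioi t, (s ∩ Set.Ioc t y').Nonempty := by
    rintro t ⟨hts, ht0, hty⟩ y' hy' 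
    have hq := rightPoly_spec (hex t).1
    have hqp : rightPoly f t = p := by
      rcases lt_or_eq_of_le ht0 with htpos | hteq
      · have hL : IsLeftPiece f t p := by
          refine ⟨t, htpos, fun z hz => ?_⟩
          exact hts z ⟨by have := hz.1; linarith, hz.2⟩
        rw [rightPoly_eq_leftPoly (ne_of_gt htpos) (hex t).1 (hex t).2
          (fun j hj => hw j hj t), leftPoly_eq hL]
      · rw [← hteq]
    obtain ⟨e, he, hval⟩ := hq
    refine ⟨min (t + e / 2) y', ?_, lt_min (by linarith) hy', min_le_right _ _⟩
    intro z hz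
    rcases le_or_gt z t with hzt | hzt
    · exact hts z ⟨hz.1, hzt⟩
    · have hz2 : z ≤ t + e / 2 := le_trans hz.2 (min_le_left _ _)
      rw [← hqp]
      exact hval z ⟨le_of_lt hzt, by linarith⟩
  have := IsClosed.Icc_subset_of_forall_exists_gt
    (hclosed.inter isClosed_Icc) h0 hstep
  exact this ⟨hy, le_refl y⟩ y ⟨hy, le_refl y⟩

end TropAux
end TropAux2
section TropAux3
open Trop Polynomial

namespace TropAux

variable {f : ℝ → ℝ} {x : ℝ} {p q : Polynomial ℝ}

lemma right_piece_reflect (hp : IsLeftPiece f (-x) p) :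
    IsRightPiece (fun t => f (-t)) x (p.comp (-X)) := by
  obtain ⟨e, he, h⟩ := hp
  refine ⟨e, he, fun z hz => ?_⟩
  have hmem : -z ∈ Set.Ioc (-x - e) (-x) :=
    ⟨by have := hz.2; linarith, by have := hz.1; linarith⟩
  have := h (-z) hmem
  simp only [eval_comp, eval_neg, eval_X]
  exact this

lemma left_piece_reflect (hp : IsRightPiece f (-x) p) :
    IsLeftPiece (fun t => f (-t)) x (p.comp (-X)) := by
  obtain ⟨e, he, h⟩ := hp
  refine ⟨e, he, fun z hz => ?_⟩
  have hmem : -z ∈ Set.Ico (-x) (-x + e) :=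
    ⟨by have := hz.2; linarith, by have := hz.1; linarith⟩
  have := h (-z) hmem
  simp only [eval_comp, eval_neg, eval_X]
  exact this

lemma iterD_neg (j : ℕ) (p : Polynomial ℝ) :
    (fun r : Polynomial ℝ => derivative r)^[j] (-p) =
      -((fun r : Polynomial ℝ => derivative r)^[j] p) := by
  induction j generalizing p with
  | zero => rfl
  | succ j ih =>
      simp only [Function.iterate_succ_apply, derivative_neg]
      exact ih _

lemma iterD_comp_neg (j : ℕ) (p : Polynomial ℝ) :
    (fun r : Polynomial ℝ => derivative r)^[j] (p.comp (-X)) =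
      ((-1 : ℝ) ^ j) • (((fun r : Polynomial ℝ => derivative r)^[j] p).comp (-X)) := by
  induction j generalizing p with
  | zero => simp
  | succ j ih =>
      rw [Function.iterate_succ_apply, Function.iterate_succ_apply]
      have hd : derivative (p.comp (-X)) = ((-(derivative p)).comp (-X)) := by
        simp only [derivative_comp]
        simp [neg_one_mul]
      rw [hd, ih, iterD_neg, Polynomial.neg_comp, pow_succ, mul_smul, smul_neg, neg_one_smul,
        smul_neg]

lemma sgnR_neg (x : ℝ) : sgnR x = -sgnL (-x) := by
  unfold sgnR sgnL
  rcases lt_trichotomy x 0 with h | h | h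
  · rw [if_pos h, if_pos (by linarith : (0:ℝ) < -x)]
    try norm_num
  · subst h
    norm_num
  · rw [if_neg (by linarith), if_neg (by linarith : ¬(0:ℝ) < -x)]
    try norm_num

lemma sgnL_neg (x : ℝ) : sgnL x = -sgnR (-x) := by
  unfold sgnR sgnL
  rcases lt_trichotomy x 0 with h | h | h
  · rw [if_neg (by linarith : ¬(0:ℝ) < x), if_neg (by linarith : ¬(-x:ℝ) < 0)]
    try norm_num
  · subst h
    norm_num
  · rw [if_pos h, if_pos (by linarith : (-x:ℝ) < 0)]
    try norm_num

lemma omega_reflect (j : ℕ)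
    (h1 : ∃ p, IsRightPiece f (-x) p) (h2 : ∃ p, IsLeftPiece f (-x) p) :
    Trop.omega (fun t => f (-t)) j x = Trop.omega f j (-x) := by
  have hR : rightPoly (fun t => f (-t)) x = (leftPoly f (-x)).comp (-X) :=
    rightPoly_eq (right_piece_reflect (leftPoly_spec h2))
  have hL : leftPoly (fun t => f (-t)) x = (rightPoly f (-x)).comp (-X) :=
    leftPoly_eq (left_piece_reflect (rightPoly_spec h1))
  have hkey : ∀ c A : ℝ, (-c) ^ (j + 1) * ((-1 : ℝ) ^ j * A) = -(c ^ (j + 1) * A) := by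
    intro c A
    have hodd : ((-1 : ℝ)) ^ (j + 1) * (-1 : ℝ) ^ j = -1 := by
      rw [← pow_add]
      exact Odd.neg_one_pow ⟨j, by ring⟩
    rw [neg_pow]
    linear_combination c ^ (j + 1) * A * hodd
  unfold Trop.omega Trop.rderiv Trop.lderiv
  rw [hR, hL, iterD_comp_neg, iterD_comp_neg, sgnR_neg x, sgnL_neg x]
  simp only [eval_smul, eval_comp, eval_neg, eval_X, smul_eq_mul]
  rw [hkey, hkey]
  ring

end TropAux
end TropAux3
section TropAux4
open Trop Polynomial

namespace TropAux

variable {f : ℝ → ℝ} {x : ℝ} {p q : Polynomial ℝ}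

lemma extend_left (hc : Continuous f)
    (hex : ∀ y : ℝ, (∃ p, IsRightPiece f y p) ∧ (∃ p, IsLeftPiece f y p))
    (hw : ∀ j : ℕ, 1 ≤ j → ∀ x : ℝ, Trop.omega f j x = 0) :
    ∀ y : ℝ, y ≤ 0 → f y = (leftPoly f 0).eval y := by
  set μ : ℝ → ℝ := fun t => f (-t) with hμ
  have hcμ : Continuous μ := hc.comp continuous_neg
  have hexμ : ∀ y, (∃ p, IsRightPiece μ y p) ∧ (∃ p, IsLeftPiece μ y p) := fun y =>
    ⟨⟨_, right_piece_reflect (leftPoly_spec (hex (-y)).2)⟩,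
     ⟨_, left_piece_reflect (rightPoly_spec (hex (-y)).1)⟩⟩
  have hwμ : ∀ j : ℕ, 1 ≤ j → ∀ x : ℝ, Trop.omega μ j x = 0 := fun j hj x => by
    rw [omega_reflect j (hex (-x)).1 (hex (-x)).2]
    exact hw j hj (-x)
  intro y hy
  have hext := extend_right hcμ hexμ hwμ (-y) (by linarith)
  have h0 : rightPoly μ 0 = (leftPoly f 0).comp (-X) := by
    have hrp := right_piece_reflect (x := 0) (leftPoly_spec (hex (-0)).2)
    rw [neg_zero] at hrp
    exact rightPoly_eq hrp
  rw [h0] at hext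
  have hμy : μ (-y) = f y := by simp [hμ]
  rw [hμy] at hext
  rw [hext]
  simp [eval_comp]

lemma eval_add_eval_neg
    (h1 : ∃ p, IsRightPiece f 0 p) (h2 : ∃ p, IsLeftPiece f 0 p)
    (hw : ∀ j : ℕ, 1 ≤ j → Trop.omega f j 0 = 0) (r : ℝ) :
    (rightPoly f 0).eval r + (leftPoly f 0).eval (-r) = 2 * f 0 := by
  set p := rightPoly f 0 with hp
  set q := leftPoly f 0 with hq
  have hc0 : p.coeff 0 = f 0 := by
    rw [coeff_zero_eq_eval_zero]; exact right_eval_self (rightPoly_spec h1)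
  have hc0' : q.coeff 0 = f 0 := by
    rw [coeff_zero_eq_eval_zero]; exact left_eval_self (leftPoly_spec h2)
  have hev : ∀ (P : Polynomial ℝ) (k : ℕ),
      ((fun r : Polynomial ℝ => derivative r)^[k] P).eval 0 = (k.factorial : ℝ) * P.coeff k := by
    intro P k
    rw [show (fun r : Polynomial ℝ => derivative r) = ⇑(@Polynomial.derivative ℝ _) from rfl]
    rw [← coeff_zero_eq_eval_zero, Polynomial.coeff_iterate_derivative]
    rw [zero_add, Nat.descFactorial_self, nsmul_eq_mul]
  have hck : ∀ k : ℕ, 1 ≤ k → p.coeff k = (-1 : ℝ) ^ (k + 1) * q.coeff k := by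
    intro k hk
    have hw' := hw k hk
    unfold Trop.omega Trop.rderiv Trop.lderiv at hw'
    have e1 : sgnR 0 = 1 := by unfold Trop.sgnR; norm_num
    have e2 : sgnL 0 = -1 := by unfold Trop.sgnL; norm_num
    rw [e1, e2, hev, hev, one_pow, ← hp, ← hq] at hw'
    rw [_root_.div_eq_zero_iff] at hw'
    have hfac : (k.factorial : ℝ) ≠ 0 := by positivity
    have h' := hw'.resolve_right hfac
    have hmul : (k.factorial : ℝ) * (p.coeff k - (-1 : ℝ) ^ (k + 1) * q.coeff k) = 0 := by
      linear_combination h'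
    have := (mul_eq_zero.mp hmul).resolve_left hfac
    linarith
  set N := max p.natDegree q.natDegree + 1 with hN
  have hpN : p.natDegree < N := lt_of_le_of_lt (le_max_left _ _) (Nat.lt_succ_self _)
  have hqN : q.natDegree < N := lt_of_le_of_lt (le_max_right _ _) (Nat.lt_succ_self _)
  rw [Polynomial.eval_eq_sum_range' hpN, Polynomial.eval_eq_sum_range' hqN,
    ← Finset.sum_add_distrib]
  rw [Finset.sum_eq_single 0]
  · simp [hc0, hc0']
    ring
  · intro b _ hb0
    rw [hck b (Nat.one_le_iff_ne_zero.mpr hb0)]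
    have hnr : (-r) ^ b = (-1 : ℝ) ^ b * r ^ b := by rw [neg_pow]
    rw [hnr, pow_succ]
    ring
  · intro h
    exact absurd (Finset.mem_range.mpr (by omega)) h

lemma fin_iSup_add {k : ℕ} (u : Fin (k + 1) → ℝ) (a : ℝ) :
    (⨆ i, (u i + a)) = (⨆ i, u i) + a := by
  apply le_antisymm
  · exact ciSup_le fun i =>
      add_le_add_left (le_ciSup (Set.Finite.bddAbove (Set.finite_range u)) i) a
  · have h : ∀ i, u i ≤ (⨆ i, (u i + a)) - a := fun i => by
      have := le_ciSup (Set.Finite.bddAbove (Set.finite_range (fun i => u i + a))) i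
      linarith
    have h2 : (⨆ i, u i) ≤ (⨆ i, (u i + a)) - a := ciSup_le h
    linarith

end TropAux
end TropAux4
/-- the tropical Cartan characteristic function is independent of the chosen
reduced representation of an `n`-th tropical holomorphic curve. -/
theorem statement12 (n m : ℕ) (hn : 1 ≤ n) (hm : 1 ≤ m)
    (f g : Fin (m + 1) → ℝ → ℝ)
    (hf : Trop.IsHoloCurveRep n f) (hg : Trop.IsHoloCurveRep n g)
    (hfr : Trop.ReducedRep f) (hgr : Trop.ReducedRep g)
    (hsame : Trop.SameCurve f g) :
    ∀ r : ℝ, 0 < r → Trop.TCartan f r = Trop.TCartan g r := by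
  intro r hr
  set lam : ℝ → ℝ := fun x => f 0 x - g 0 x with hlam
  have hpt : ∀ x i, f i x = g i x + lam x := by
    intro x i
    obtain ⟨l, hl⟩ := hsame x
    have h0 := hl 0
    have hi := hl i
    show f i x = g i x + (f 0 x - g 0 x)
    rw [hi, h0]; ring
  obtain ⟨df, hfE, -⟩ := hf
  obtain ⟨dg, hgE, -⟩ := hg
  have hfpieces : ∀ i (y : ℝ),
      (∃ p, Trop.IsRightPiece (f i) y p) ∧ (∃ p, Trop.IsLeftPiece (f i) y p) :=
    fun i y => TropAux.exists_pieces (hfE i).1 y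
  have hgpieces : ∀ i (y : ℝ),
      (∃ p, Trop.IsRightPiece (g i) y p) ∧ (∃ p, Trop.IsLeftPiece (g i) y p) :=
    fun i y => TropAux.exists_pieces (hgE i).1 y
  have hlampieces : ∀ y : ℝ,
      (∃ p, Trop.IsRightPiece lam y p) ∧ (∃ p, Trop.IsLeftPiece lam y p) := fun y =>
    ⟨⟨_, TropAux.right_sub (TropAux.rightPoly_spec (hfpieces 0 y).1)
        (TropAux.rightPoly_spec (hgpieces 0 y).1)⟩,
     ⟨_, TropAux.left_sub (TropAux.leftPoly_spec (hfpieces 0 y).2)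
        (TropAux.leftPoly_spec (hgpieces 0 y).2)⟩⟩
  have homega : ∀ i (j : ℕ) (x : ℝ),
      Trop.omega (f i) j x = Trop.omega (g i) j x + Trop.omega lam j x := by
    intro i j x
    have hfe : f i = fun y => g i y + lam y := funext fun y => hpt y i
    rw [hfe]
    exact TropAux.omega_add (hgpieces i x).1 (hgpieces i x).2
      (hlampieces x).1 (hlampieces x).2 j
  have hlamomega : ∀ j : ℕ, 1 ≤ j → ∀ x : ℝ, Trop.omega lam j x = 0 := by
    intro j hj x
    by_contra hne
    rcases lt_or_gt_of_ne hne with hlt | hgt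
    · refine hgr ⟨j, x, hj, fun i => ?_⟩
      have h1 := homega i j x
      have h2 := (hfE i).2 j hj x
      linarith
    · refine hfr ⟨j, x, hj, fun i => ?_⟩
      have h1 := homega i j x
      have h2 := (hgE i).2 j hj x
      linarith
  have hclam : Continuous lam := ((hfE 0).1.1).sub ((hgE 0).1.1)
  have hkey : lam r + lam (-r) = 2 * lam 0 := by
    have h1 := TropAux.extend_right hclam hlampieces hlamomega r (le_of_lt hr)
    have h2 := TropAux.extend_left hclam hlampieces hlamomega (-r) (by linarith)
    rw [h1, h2]
    exact TropAux.eval_add_eval_neg (hlampieces 0).1 (hlampieces 0).2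
      (fun j hj => hlamomega j hj 0) r
  have hF : ∀ x : ℝ, Trop.Fmax f x = Trop.Fmax g x + lam x := by
    intro x
    unfold Trop.Fmax
    exact (iSup_congr fun i => hpt x i).trans
      (TropAux.fin_iSup_add (fun i => g i x) (lam x))
  unfold Trop.TCartan
  rw [hF r, hF (-r), hF 0]
  clear_value lam
  linarith [hkey]
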